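/- arXiv:1907.12394 — 3 statements merged into one kernel-verified Lean document; each statement's English description precedes it below -/
import Mathlib

section
/- Let △ be a continuous t-norm on I = [0,1] and ⋆ a binary operation on I. If the convolution ⋏ is a t-norm on L, then for every y ∈ (0,1) the functions x ↦ x ⋆ y and x ↦ y ⋆ x are increasing on I. -/
open unitInterval

noncomputable section

instance : Fact ((0:ℝ) ≤ 1) := ⟨zero_le_one⟩

/-- A function `f : I → I` is normal if `sup {f x : x ∈ I} = 1`. -/
def IsNormal (f : I → I) : Prop := sSup (Set.range f) = 1

/-- A function `f : I → I` is convex if `f y ≥ min (f x) (f z)` whenever `x ≤ y ≤ z`. -/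
def IsConvexFn (f : I → I) : Prop :=
  ∀ x y z : I, x ≤ y → y ≤ z → min (f x) (f z) ≤ f y

/-- Membership in `L`, the set of normal convex functions from `I` to `I`. -/
def InL (f : I → I) : Prop := IsNormal f ∧ IsConvexFn f

/-- A t-norm on `I`: commutative, associative, increasing in each argument,
with neutral element `1`. -/
def IsTnorm (op : I → I → I) : Prop :=
  (∀ x y : I, op x y = op y x) ∧
  (∀ x y z : I, op (op x y) z = op x (op y z)) ∧
  (∀ y : I, Monotone fun x => op x y) ∧
  (∀ x : I, Monotone fun y => op x y) ∧
  (∀ x : I, op 1 x = x) ∧ (∀ x : I, op x 1 = x)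

/-- A t-conorm on `I`: commutative, associative, increasing in each argument,
with neutral element `0`. -/
def IsTconorm (op : I → I → I) : Prop :=
  (∀ x y : I, op x y = op y x) ∧
  (∀ x y z : I, op (op x y) z = op x (op y z)) ∧
  (∀ y : I, Monotone fun x => op x y) ∧
  (∀ x : I, Monotone fun y => op x y) ∧
  (∀ x : I, op 0 x = x) ∧ (∀ x : I, op x 0 = x)

/-- Continuity of a binary operation on `I`, as a map `I × I → I`. -/
def IsCont (op : I → I → I) : Prop := Continuous fun p : I × I => op p.1 p.2

/-- The convolution `(f ⋏ g)(x) = sup {f y ⋆ g z : y △ z = x}` (`star` playing the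
role of `⋆` and `tri` the role of `△`); the sup of the empty set is `0`. -/
def conv (star tri : I → I → I) (f g : I → I) : I → I :=
  fun x => sSup {a : I | ∃ y z : I, tri y z = x ∧ a = star (f y) (g z)}

/-- The meet `(f ⊓ g)(x) = sup {min (f y) (g z) : min y z = x}`. -/
def fmeet (f g : I → I) : I → I :=
  fun x => sSup {a : I | ∃ y z : I, min y z = x ∧ a = min (f y) (g z)}

/-- The partial order `f ⊑ g` iff `f ⊓ g = f`. -/
def sqle (f g : I → I) : Prop := fmeet f g = f

/-- The characteristic function `χ_{x}` of the singleton `{x}`. -/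
def chi (x : I) : I → I := fun t => if t = x then 1 else 0

/-- A binary operation `C` on functions is a t-norm on `L` if `L` is closed under `C` and,
on `L`, `C` is commutative, associative, has `χ_{1}` as neutral element, and is increasing
in each argument with respect to `⊑`. -/
def IsTnormOnL (C : (I → I) → (I → I) → (I → I)) : Prop :=
  (∀ f g, InL f → InL g → InL (C f g)) ∧
  (∀ f g, InL f → InL g → C f g = C g f) ∧
  (∀ f g h, InL f → InL g → InL h → C (C f g) h = C f (C g h)) ∧
  (∀ f, InL f → C f (chi 1) = f) ∧
  (∀ f g h, InL f → InL g → InL h → sqle g h → sqle (C f g) (C f h))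

/-- A binary operation `C` on functions is a t-conorm on `L` if `L` is closed under `C` and,
on `L`, `C` is commutative, associative, has `χ_{0}` as neutral element, and is increasing
in each argument with respect to `⊑`. -/
def IsTconormOnL (C : (I → I) → (I → I) → (I → I)) : Prop :=
  (∀ f g, InL f → InL g → InL (C f g)) ∧
  (∀ f g, InL f → InL g → C f g = C g f) ∧
  (∀ f g h, InL f → InL g → InL h → C (C f g) h = C f (C g h)) ∧
  (∀ f, InL f → C f (chi 0) = f) ∧
  (∀ f g h, InL f → InL g → InL h → sqle g h → sqle (C f g) (C f h))

/-- `f^L (x) = sup {f y : y ≤ x}`. -/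
def fL (f : I → I) : I → I := fun x => sSup (f '' Set.Iic x)

/-- `f^R (x) = sup {f y : y ≥ x}`. -/
def fR (f : I → I) : I → I := fun x => sSup (f '' Set.Ici x)

/-- The function `V_x (t) = (x - 1) * t + 1`. -/
def Vfn (x : I) : I → I := fun t =>
  ⟨(x.1 - 1) * t.1 + 1, by
    obtain ⟨hx0, hx1⟩ := x.2; obtain ⟨ht0, ht1⟩ := t.2
    constructor <;> nlinarith⟩

lemma Vfn_one' (a : I) : Vfn a 1 = a := by
  apply Subtype.ext
  show (a.1 - 1) * (1 : I).1 + 1 = a.1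
  simp

lemma Vfn_zero' (a : I) : Vfn a 0 = 1 := by
  apply Subtype.ext
  show (a.1 - 1) * (0 : I).1 + 1 = (1 : I).1
  simp

lemma Vfn_anti (a : I) : Antitone (Vfn a) := by
  intro s t hst
  have hst' : (s : ℝ) ≤ t := hst
  have ha := a.2.2
  show ((Vfn a t : I) : ℝ) ≤ (Vfn a s : I)
  show (a.1 - 1) * t.1 + 1 ≤ (a.1 - 1) * s.1 + 1
  nlinarith

lemma Vfn_mono {a b : I} (hab : a ≤ b) (t : I) : Vfn a t ≤ Vfn b t := by
  have hab' : (a : ℝ) ≤ b := hab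
  have ht := t.2.1
  show (a.1 - 1) * t.1 + 1 ≤ (b.1 - 1) * t.1 + 1
  nlinarith

lemma Vfn_inL (a : I) : InL (Vfn a) := by
  constructor
  · apply le_antisymm
    · apply sSup_le
      rintro x ⟨t, rfl⟩
      exact le_one'
    · exact le_sSup ⟨0, Vfn_zero' a⟩
  · intro x y z hxy hyz
    exact le_trans (min_le_right _ _) (Vfn_anti a hyz)

lemma min_eq_one_iff' {y z : I} (h : min y z = 1) : y = 1 ∧ z = 1 := by
  constructor
  · exact le_antisymm le_one' (h ▸ min_le_left y z)
  · exact le_antisymm le_one' (h ▸ min_le_right y z)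

lemma tri_eq_one {tri : I → I → I} (htri : IsTnorm tri) {y z : I}
    (h : tri y z = 1) : y = 1 ∧ z = 1 := by
  obtain ⟨_, _, hml, hmr, h1, h2⟩ := htri
  have hy : tri y z ≤ y := by
    have := hmr y (le_one' : z ≤ 1)
    simpa [h2 y] using this
  have hz : tri y z ≤ z := by
    have := hml z (le_one' : y ≤ 1)
    simpa [h1 z] using this
  exact ⟨le_antisymm le_one' (h ▸ hy), le_antisymm le_one' (h ▸ hz)⟩

lemma conv_one {star tri : I → I → I} (htri : IsTnorm tri) (f g : I → I) :
    conv star tri f g 1 = star (f 1) (g 1) := by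
  unfold conv
  have hset : {a : I | ∃ y z : I, tri y z = 1 ∧ a = star (f y) (g z)} =
      {star (f 1) (g 1)} := by
    ext a
    constructor
    · rintro ⟨y, z, hyz, rfl⟩
      obtain ⟨rfl, rfl⟩ := tri_eq_one htri hyz
      rfl
    · rintro rfl
      exact ⟨1, 1, by simpa using htri.2.2.2.2.1 1, rfl⟩
  rw [hset, sSup_singleton]

lemma fmeet_one (f g : I → I) : fmeet f g 1 = min (f 1) (g 1) := by
  unfold fmeet
  have hset : {a : I | ∃ y z : I, min y z = 1 ∧ a = min (f y) (g z)} =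
      {min (f 1) (g 1)} := by
    ext a
    constructor
    · rintro ⟨y, z, hyz, rfl⟩
      obtain ⟨rfl, rfl⟩ := min_eq_one_iff' hyz
      rfl
    · rintro rfl
      exact ⟨1, 1, min_self 1, rfl⟩
  rw [hset, sSup_singleton]

lemma sqle_Vfn {a b : I} (hab : a ≤ b) : sqle (Vfn a) (Vfn b) := by
  funext x
  unfold fmeet
  apply le_antisymm
  · apply sSup_le
    rintro c ⟨y, z, hyz, rfl⟩
    rcases le_total y z with hle | hle
    · have hx : y = x := by rw [← hyz, min_eq_left hle]
      exact le_trans (min_le_left _ _) (by rw [hx])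
    · have hx : z = x := by rw [← hyz, min_eq_right hle]
      have hxy : x ≤ y := hx ▸ hle
      exact le_trans (min_le_left _ _) (Vfn_anti a hxy)
  · apply le_sSup
    exact ⟨x, x, min_self x, (min_eq_left (Vfn_mono hab x)).symm⟩

theorem stmt_8 (star tri : I → I → I) (htri : IsTnorm tri) (htric : IsCont tri)
    (h : IsTnormOnL (conv star tri)) :
    ∀ y : I, 0 < y → y < 1 →
      Monotone (fun x => star x y) ∧ Monotone (fun x => star y x) := by
  obtain ⟨hclosed, hcomm, _hassoc, _hneut, hmono⟩ := h
  intro y _ _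
  have key : ∀ a b : I, a ≤ b → star y a ≤ star y b := by
    intro a b hab
    have hs := hmono (Vfn y) (Vfn a) (Vfn b) (Vfn_inL y) (Vfn_inL a) (Vfn_inL b)
      (sqle_Vfn hab)
    have h1 := congrFun hs 1
    rw [fmeet_one] at h1
    have hle : conv star tri (Vfn y) (Vfn a) 1 ≤ conv star tri (Vfn y) (Vfn b) 1 := by
      rw [← h1]; exact min_le_right _ _
    rwa [conv_one htri, conv_one htri, Vfn_one', Vfn_one', Vfn_one'] at hle
  have hsym : ∀ a : I, star a y = star y a := by
    intro a
    have := congrFun (hcomm (Vfn a) (Vfn y) (Vfn_inL a) (Vfn_inL y)) 1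
    rwa [conv_one htri, conv_one htri, Vfn_one', Vfn_one'] at this
  constructor
  · intro a b hab
    simp only
    rw [hsym a, hsym b]
    exact key a b hab
  · intro a b hab
    exact key a b hab
end
end

section
/- Let ⋆ be a continuous t-norm on I = [0,1] and △ a binary operation on I. If the convolution ⋏ is a t-norm on L, then for every y ∈ (0,1) the functions x ↦ x △ y and x ↦ y △ x are increasing on I. -/
open unitInterval

noncomputable section

/-!
Characteristic functions are a copy of `I` inside `L`: `χ_a ⋏ χ_b = χ_{a △ b}` (only `0 ⋆ t = 0`
and `1 ⋆ 1 = 1` matter), and `χ_a ⊑ χ_b` iff `a ≤ b`. Hence commutativity of `⋏` forces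
commutativity of `△`, and monotonicity of `⋏` with respect to `⊑` forces monotonicity of `△`.
-/

namespace IsTnorm

variable {star : I → I → I}

lemma zero_left (hstar : IsTnorm star) (t : I) : star 0 t = 0 :=
  le_antisymm ((hstar.2.2.2.1 0 le_one').trans_eq (hstar.2.2.2.2.2 0)) nonneg'

lemma zero_right (hstar : IsTnorm star) (t : I) : star t 0 = 0 := by
  rw [hstar.1]
  exact hstar.zero_left t

end IsTnorm

lemma chi_injective : Function.Injective chi := by
  intro a b hab
  simpa [chi] using congrFun hab a

lemma inL_chi (a : I) : InL (chi a) := by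
  refine ⟨le_antisymm le_one' (le_sSup ⟨a, if_pos rfl⟩), fun x y z hxy hyz => ?_⟩
  by_cases hx : x = a
  · by_cases hz : z = a
    · have hya : y = a := le_antisymm (hyz.trans_eq hz) (hx ▸ hxy)
      simp only [chi, hya, if_true]
      exact le_one'
    · exact (min_le_right _ _).trans_eq (if_neg hz) |>.trans nonneg'
  · exact (min_le_left _ _).trans_eq (if_neg hx) |>.trans nonneg'

lemma conv_chi {star : I → I → I} (hstar : IsTnorm star) (tri : I → I → I) (a b : I) :
    conv star tri (chi a) (chi b) = chi (tri a b) := by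
  funext x
  by_cases hx : x = tri a b
  · simp only [conv, chi, if_pos hx]
    exact le_antisymm le_one' (le_sSup ⟨a, b, hx.symm, by simp [hstar.2.2.2.2.1 1]⟩)
  · simp only [conv, chi, if_neg hx]
    refine le_antisymm (sSup_le ?_) nonneg'
    rintro _ ⟨y, z, rfl, rfl⟩
    by_cases hy : y = a
    · by_cases hz : z = b
      · exact absurd (by rw [hy, hz]) hx
      · rw [if_neg hz]
        exact (hstar.zero_right _).le
    · rw [if_neg hy]
      exact (hstar.zero_left _).le

lemma fmeet_chi (a b : I) : fmeet (chi a) (chi b) = chi (min a b) := by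
  funext x
  by_cases hx : x = min a b
  · simp only [fmeet, chi, if_pos hx]
    exact le_antisymm le_one' (le_sSup ⟨a, b, hx.symm, by simp⟩)
  · simp only [fmeet, chi, if_neg hx]
    refine le_antisymm (sSup_le ?_) nonneg'
    rintro _ ⟨y, z, rfl, rfl⟩
    by_cases hy : y = a
    · by_cases hz : z = b
      · exact absurd (by rw [hy, hz]) hx
      · simp [hz]
    · simp [hy]

lemma sqle_chi_iff (a b : I) : sqle (chi a) (chi b) ↔ a ≤ b := by
  rw [sqle, fmeet_chi, chi_injective.eq_iff, min_eq_left_iff]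

namespace IsTnormOnL

variable {star tri : I → I → I}

lemma comm_of_conv (hstar : IsTnorm star) (h : IsTnormOnL (conv star tri)) (a b : I) :
    tri a b = tri b a := by
  have hab := h.2.1 (chi a) (chi b) (inL_chi a) (inL_chi b)
  rwa [conv_chi hstar, conv_chi hstar, chi_injective.eq_iff] at hab

lemma monotone_right_of_conv (hstar : IsTnorm star) (h : IsTnormOnL (conv star tri)) (c : I) :
    Monotone (tri c) := by
  intro a b hab
  have hm := h.2.2.2.2 (chi c) (chi a) (chi b) (inL_chi c) (inL_chi a) (inL_chi b)
    ((sqle_chi_iff a b).mpr hab)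
  rwa [conv_chi hstar, conv_chi hstar, sqle_chi_iff] at hm

lemma monotone_left_of_conv (hstar : IsTnorm star) (h : IsTnormOnL (conv star tri)) (c : I) :
    Monotone fun x => tri x c := by
  simpa only [h.comm_of_conv hstar _ c] using h.monotone_right_of_conv hstar c

end IsTnormOnL

theorem stmt_17_general (star tri : I → I → I) (hstar : IsTnorm star)
    (h : IsTnormOnL (conv star tri)) :
    ∀ y : I, 0 < y → y < 1 →
      Monotone (fun x => tri x y) ∧ Monotone (fun x => tri y x) :=
  fun y _ _ => ⟨h.monotone_left_of_conv hstar y, h.monotone_right_of_conv hstar y⟩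

theorem stmt_17 (star tri : I → I → I) (hstar : IsTnorm star) (hstarc : IsCont star)
    (h : IsTnormOnL (conv star tri)) :
    ∀ y : I, 0 < y → y < 1 →
      Monotone (fun x => tri x y) ∧ Monotone (fun x => tri y x) :=
  stmt_17_general star tri hstar h
end
end

section
/- Let ⋆ be a continuous t-norm on I = [0,1] and △ a continuous binary operation on I. Then △ is a t-norm on I if and only if the convolution ⋏ defined by (f ⋏ g)(x) = sup{f(y) ⋆ g(z) : y △ z = x} is a t-norm on L. -/
open unitInterval

noncomputable section

open Set

section Aux

lemma I_le_one (x : I) : x ≤ 1 := le_top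
lemma I_zero_le (x : I) : (0:I) ≤ x := bot_le

lemma min_sSup_le' {A B : Set I} {c : I} (hA : A.Nonempty) (hB : B.Nonempty)
    (h : ∀ a ∈ A, ∀ b ∈ B, min a b ≤ c) : min (sSup A) (sSup B) ≤ c := by
  rcases le_total (sSup A) (sSup B) with hle | hle
  · rw [min_eq_left hle]
    refine le_of_forall_lt fun w hw => ?_
    obtain ⟨a, ha, haw⟩ := lt_sSup_iff.mp hw
    obtain ⟨b, hb, hbw⟩ := lt_sSup_iff.mp (lt_of_lt_of_le hw hle)
    exact lt_of_lt_of_le (lt_min haw hbw) (h a ha b hb)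
  · rw [min_eq_right hle]
    refine le_of_forall_lt fun w hw => ?_
    obtain ⟨b, hb, hbw⟩ := lt_sSup_iff.mp hw
    obtain ⟨a, ha, haw⟩ := lt_sSup_iff.mp (lt_of_lt_of_le hw hle)
    exact lt_of_lt_of_le (lt_min haw hbw) (h a ha b hb)

lemma map_sSup_left {op : I → I → I} (hc : IsCont op)
    (hm : ∀ y : I, Monotone fun x => op x y) (h0 : ∀ y : I, op 0 y = 0)
    (A : Set I) (c : I) : op (sSup A) c = sSup ((fun a => op a c) '' A) :=
  Monotone.map_sSup_of_continuousAt
    ((hc.comp (continuous_id.prodMk continuous_const)).continuousAt) (hm c) (h0 c)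

lemma map_sSup_right {op : I → I → I} (hc : IsCont op)
    (hm : ∀ x : I, Monotone fun y => op x y) (h0 : ∀ x : I, op x 0 = 0)
    (A : Set I) (c : I) : op c (sSup A) = sSup ((fun a => op c a) '' A) :=
  Monotone.map_sSup_of_continuousAt
    ((hc.comp (continuous_const.prodMk continuous_id)).continuousAt) (hm c) (h0 c)

end Aux
section Seg

/-- The segment from `a` to `c`, parametrized by `t ∈ I`. -/
def seg (a c t : I) : I :=
  ⟨a.1 + t.1 * (c.1 - a.1), by
    obtain ⟨ha0, ha1⟩ := a.2; obtain ⟨hc0, hc1⟩ := c.2; obtain ⟨ht0, ht1⟩ := t.2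
    constructor
    · nlinarith [mul_nonneg ht0 hc0, mul_nonneg (by linarith : (0:ℝ) ≤ 1 - t.1) ha0]
    · nlinarith [mul_nonneg (by linarith : (0:ℝ) ≤ 1 - t.1) (by linarith : (0:ℝ) ≤ 1 - a.1),
        mul_nonneg ht0 (by linarith : (0:ℝ) ≤ 1 - c.1)]⟩

lemma seg_zero (a c : I) : seg a c 0 = a := Subtype.ext (by simp [seg])
lemma seg_one (a c : I) : seg a c 1 = c := Subtype.ext (by simp [seg])

lemma seg_continuous (a c : I) : Continuous fun t => seg a c t :=
  Continuous.subtype_mk (by continuity) _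

lemma convex_seg {f : I → I} (hf : IsConvexFn f) (a c t : I) :
    min (f a) (f c) ≤ f (seg a c t) := by
  obtain ⟨ht0, ht1⟩ := t.2
  rcases le_total a c with h | h
  · refine hf a (seg a c t) c ?_ ?_
    · show a.1 ≤ a.1 + t.1 * (c.1 - a.1)
      have : (a:ℝ) ≤ c := h
      nlinarith
    · show a.1 + t.1 * (c.1 - a.1) ≤ c.1
      have : (a:ℝ) ≤ c := h
      nlinarith
  · rw [min_comm]
    refine hf c (seg a c t) a ?_ ?_
    · show c.1 ≤ a.1 + t.1 * (c.1 - a.1)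
      have : (c:ℝ) ≤ a := h
      nlinarith
    · show a.1 + t.1 * (c.1 - a.1) ≤ a.1
      have : (c:ℝ) ≤ a := h
      nlinarith

end Seg
section Path

lemma ivtI {ψ : I → I} (hψ : Continuous ψ) {y : I} (hy : y ∈ Set.uIcc (ψ 0) (ψ 1)) :
    ∃ t, ψ t = y := by
  obtain ⟨t, _, ht⟩ := intermediate_value_uIcc (a := (0:I)) (b := 1) hψ.continuousOn hy
  exact ⟨t, ht⟩

lemma path_exists {star tri : I → I → I} (hstarm1 : ∀ y : I, Monotone fun x => star x y)
    (hstarm2 : ∀ x : I, Monotone fun y => star x y) (htric : IsCont tri)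
    {f g : I → I} (hf : IsConvexFn f) (hg : IsConvexFn g) (a b c d y : I)
    (hy : y ∈ Set.uIcc (tri a b) (tri c d)) :
    ∃ p q, tri p q = y ∧ min (star (f a) (g b)) (star (f c) (g d)) ≤ star (f p) (g q) := by
  have contseg : ∀ u v w : I, Continuous fun t => tri (seg u v t) w :=
    fun u v w => htric.comp ((seg_continuous u v).prodMk continuous_const)
  have contseg' : ∀ w u v : I, Continuous fun t => tri w (seg u v t) :=
    fun w u v => htric.comp (continuous_const.prodMk (seg_continuous u v))
  rcases le_total (f a) (f c) with hfac | hfac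
  · -- route through (c, b)
    rcases Set.uIcc_subset_uIcc_union_uIcc (b := tri c b) hy with h1 | h2
    · have h1' : y ∈ Set.uIcc (tri (seg a c 0) b) (tri (seg a c 1) b) := by
        rwa [seg_zero, seg_one]
      obtain ⟨t, ht⟩ := ivtI (contseg a c b) h1'
      refine ⟨seg a c t, b, ht, ?_⟩
      calc min (star (f a) (g b)) (star (f c) (g d)) ≤ star (f a) (g b) := min_le_left _ _
        _ = star (min (f a) (f c)) (g b) := by rw [min_eq_left hfac]
        _ ≤ star (f (seg a c t)) (g b) := hstarm1 (g b) (convex_seg hf a c t)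
    · have h2' : y ∈ Set.uIcc (tri c (seg b d 0)) (tri c (seg b d 1)) := by
        rwa [seg_zero, seg_one]
      obtain ⟨t, ht⟩ := ivtI (contseg' c b d) h2'
      refine ⟨c, seg b d t, ht, ?_⟩
      have hgs := convex_seg hg b d t
      rcases le_total (g b) (g d) with hbd | hbd
      · calc min (star (f a) (g b)) (star (f c) (g d)) ≤ star (f a) (g b) := min_le_left _ _
          _ ≤ star (f c) (g b) := hstarm1 (g b) hfac
          _ ≤ star (f c) (g (seg b d t)) := hstarm2 (f c) (by rw [min_eq_left hbd] at hgs; exact hgs)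
      · calc min (star (f a) (g b)) (star (f c) (g d)) ≤ star (f c) (g d) := min_le_right _ _
          _ ≤ star (f c) (g (seg b d t)) := hstarm2 (f c) (by rw [min_eq_right hbd] at hgs; exact hgs)
  · -- route through (a, d)
    rcases Set.uIcc_subset_uIcc_union_uIcc (b := tri a d) hy with h1 | h2
    · have h1' : y ∈ Set.uIcc (tri a (seg b d 0)) (tri a (seg b d 1)) := by
        rwa [seg_zero, seg_one]
      obtain ⟨t, ht⟩ := ivtI (contseg' a b d) h1'
      refine ⟨a, seg b d t, ht, ?_⟩
      have hgs := convex_seg hg b d t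
      rcases le_total (g b) (g d) with hbd | hbd
      · calc min (star (f a) (g b)) (star (f c) (g d)) ≤ star (f a) (g b) := min_le_left _ _
          _ ≤ star (f a) (g (seg b d t)) := hstarm2 (f a) (by rw [min_eq_left hbd] at hgs; exact hgs)
      · calc min (star (f a) (g b)) (star (f c) (g d)) ≤ star (f c) (g d) := min_le_right _ _
          _ ≤ star (f a) (g d) := hstarm1 (g d) hfac
          _ ≤ star (f a) (g (seg b d t)) := hstarm2 (f a) (by rw [min_eq_right hbd] at hgs; exact hgs)
    · have h2' : y ∈ Set.uIcc (tri (seg a c 0) d) (tri (seg a c 1) d) := by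
        rwa [seg_zero, seg_one]
      obtain ⟨t, ht⟩ := ivtI (contseg a c d) h2'
      refine ⟨seg a c t, d, ht, ?_⟩
      calc min (star (f a) (g b)) (star (f c) (g d)) ≤ star (f c) (g d) := min_le_right _ _
        _ = star (min (f a) (f c)) (g d) := by rw [min_eq_right hfac]
        _ ≤ star (f (seg a c t)) (g d) := hstarm1 (g d) (convex_seg hf a c t)

end Path
section ConvBasic

variable {star tri : I → I → I}

lemma le_conv {f g : I → I} {x y z : I} (h : tri y z = x) :
    star (f y) (g z) ≤ conv star tri f g x :=
  le_sSup ⟨y, z, h, rfl⟩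

lemma conv_convex (hstarm1 : ∀ y : I, Monotone fun x => star x y)
    (hstarm2 : ∀ x : I, Monotone fun y => star x y) (htric : IsCont tri)
    {f g : I → I} (hf : IsConvexFn f) (hg : IsConvexFn g) :
    IsConvexFn (conv star tri f g) := by
  intro x y z hxy hyz
  refine le_of_forall_lt fun w hw => ?_
  have hwx : w < conv star tri f g x := lt_of_lt_of_le hw (min_le_left _ _)
  have hwz : w < conv star tri f g z := lt_of_lt_of_le hw (min_le_right _ _)
  obtain ⟨u, ⟨a, b, hab, rfl⟩, hu⟩ := lt_sSup_iff.mp hwx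
  obtain ⟨v, ⟨c, d, hcd, rfl⟩, hv⟩ := lt_sSup_iff.mp hwz
  have hy : y ∈ Set.uIcc (tri a b) (tri c d) := by
    rw [hab, hcd]; exact Set.mem_uIcc.2 (Or.inl ⟨hxy, hyz⟩)
  obtain ⟨p, q, hpq, hle⟩ := path_exists hstarm1 hstarm2 htric hf hg a b c d y hy
  exact lt_of_lt_of_le (lt_of_lt_of_le (lt_min hu hv) hle) (le_conv hpq)

lemma conv_normal (hstarc : IsCont star) (hstarm2 : ∀ x : I, Monotone fun y => star x y)
    (hs0r : ∀ x : I, star x 0 = 0) (hs1r : ∀ x : I, star x 1 = x)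
    {f g : I → I} (hf : IsNormal f) (hg : IsNormal g) :
    IsNormal (conv star tri f g) := by
  refine le_antisymm (sSup_le fun a _ => I_le_one a) ?_
  have h1 : ∀ y : I, f y ≤ sSup (Set.range (conv star tri f g)) := by
    intro y
    have : f y = sSup ((fun a => star (f y) a) '' Set.range g) := by
      rw [← map_sSup_right hstarc hstarm2 hs0r, hg, hs1r]
    rw [this]
    apply sSup_le
    rintro _ ⟨_, ⟨z, rfl⟩, rfl⟩
    exact le_trans (le_conv rfl) (le_sSup (Set.mem_range_self _))
  calc (1:I) = sSup (Set.range f) := hf.symm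
    _ ≤ sSup (Set.range (conv star tri f g)) := sSup_le (by rintro _ ⟨y, rfl⟩; exact h1 y)

lemma conv_comm' (hsc : ∀ x y : I, star x y = star y x) (htc : ∀ x y : I, tri x y = tri y x)
    (f g : I → I) : conv star tri f g = conv star tri g f := by
  funext x
  apply congrArg sSup
  ext a
  constructor
  · rintro ⟨y, z, h1, rfl⟩; exact ⟨z, y, by rw [htc]; exact h1, hsc _ _⟩
  · rintro ⟨y, z, h1, rfl⟩; exact ⟨z, y, by rw [htc]; exact h1, hsc _ _⟩

lemma conv_chi_one (hs0r : ∀ x : I, star x 0 = 0) (hs1r : ∀ x : I, star x 1 = x)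
    (ht1r : ∀ x : I, tri x 1 = x) (f : I → I) : conv star tri f (chi 1) = f := by
  funext x
  apply le_antisymm
  · apply sSup_le
    rintro a ⟨y, z, hyz, rfl⟩
    by_cases hz : z = 1
    · subst hz
      rw [ht1r] at hyz; subst hyz
      simp [chi, hs1r]
    · simp only [chi, if_neg hz, hs0r]
      exact I_zero_le _
  · refine le_sSup ⟨x, 1, ht1r x, ?_⟩
    simp [chi, hs1r]

lemma conv_assoc' (hstarc : IsCont star)
    (hsa : ∀ x y z : I, star (star x y) z = star x (star y z))
    (hstarm1 : ∀ y : I, Monotone fun x => star x y)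
    (hstarm2 : ∀ x : I, Monotone fun y => star x y)
    (hs0l : ∀ x : I, star 0 x = 0) (hs0r : ∀ x : I, star x 0 = 0)
    (hta : ∀ x y z : I, tri (tri x y) z = tri x (tri y z))
    (f g h : I → I) :
    conv star tri (conv star tri f g) h = conv star tri f (conv star tri g h) := by
  have key1 : ∀ x, conv star tri (conv star tri f g) h x =
      sSup {a | ∃ y z w, tri (tri y z) w = x ∧ a = star (star (f y) (g z)) (h w)} := by
    intro x
    apply le_antisymm
    · apply sSup_le
      rintro a ⟨u, w, huw, rfl⟩
      show star (sSup _) (h w) ≤ _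
      rw [map_sSup_left hstarc hstarm1 hs0l]
      apply sSup_le
      rintro _ ⟨_, ⟨y, z, hyz, rfl⟩, rfl⟩
      exact le_sSup ⟨y, z, w, by rw [hyz, huw], rfl⟩
    · apply sSup_le
      rintro a ⟨y, z, w, hx, rfl⟩
      calc star (star (f y) (g z)) (h w)
          ≤ star (conv star tri f g (tri y z)) (h w) := hstarm1 (h w) (le_conv rfl)
        _ ≤ _ := le_conv hx
  have key2 : ∀ x, conv star tri f (conv star tri g h) x =
      sSup {a | ∃ y z w, tri y (tri z w) = x ∧ a = star (f y) (star (g z) (h w))} := by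
    intro x
    apply le_antisymm
    · apply sSup_le
      rintro a ⟨y, u, hyu, rfl⟩
      show star (f y) (sSup _) ≤ _
      rw [map_sSup_right hstarc hstarm2 hs0r]
      apply sSup_le
      rintro _ ⟨_, ⟨z, w, hzw, rfl⟩, rfl⟩
      exact le_sSup ⟨y, z, w, by rw [hzw, hyu], rfl⟩
    · apply sSup_le
      rintro a ⟨y, z, w, hx, rfl⟩
      calc star (f y) (star (g z) (h w))
          ≤ star (f y) (conv star tri g h (tri z w)) := hstarm2 (f y) (le_conv rfl)
        _ ≤ _ := le_conv hx
  funext x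
  rw [key1, key2]
  apply congrArg sSup
  ext a
  constructor
  · rintro ⟨y, z, w, hx, rfl⟩; exact ⟨y, z, w, by rw [← hta]; exact hx, by rw [hsa]⟩
  · rintro ⟨y, z, w, hx, rfl⟩; exact ⟨y, z, w, by rw [hta]; exact hx, by rw [hsa]⟩

end ConvBasic
section Chi

lemma chi_InL (u : I) : InL (chi u) := by
  constructor
  · refine le_antisymm (sSup_le fun a _ => I_le_one a) ?_
    refine le_sSup ⟨u, ?_⟩
    simp [chi]
  · intro x y z hxy hyz
    by_cases hx : x = u <;> by_cases hz : z = u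
    · have hy : y = u := le_antisymm (hz ▸ hyz) (hx ▸ hxy)
      simp [chi, hx, hz, hy]
    · simpa [chi, hz] using I_zero_le _
    · simpa [chi, hx] using I_zero_le _
    · simpa [chi, hx, hz] using I_zero_le _

lemma chi_inj {u v : I} (h : chi u = chi v) : u = v := by
  by_contra hne
  have h1 := congrFun h u
  simp [chi, hne] at h1

lemma conv_chi_s18 {op tr : I → I → I} (h11 : op 1 1 = 1) (h0l : ∀ a : I, op 0 a = 0)
    (h0r : ∀ a : I, op a 0 = 0) (u v : I) :
    conv op tr (chi u) (chi v) = chi (tr u v) := by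
  funext x
  by_cases hx : x = tr u v
  · subst hx
    rw [show chi (tr u v) (tr u v) = 1 by simp [chi]]
    refine le_antisymm (sSup_le fun a _ => I_le_one a) ?_
    refine le_sSup ⟨u, v, rfl, ?_⟩
    simp [chi, h11]
  · rw [show chi (tr u v) x = 0 by simp [chi, hx]]
    apply le_antisymm ?_ (I_zero_le _)
    apply sSup_le
    rintro a ⟨y, z, hyz, rfl⟩
    by_cases hy : y = u
    · by_cases hz : z = v
      · exact absurd (by rw [← hy, ← hz]; exact hyz.symm) hx
      · simp [chi, hz, h0r]
    · simp [chi, hy, h0l]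

end Chi

section Meet

lemma fR_ge (f : I → I) {x w : I} (h : x ≤ w) : f w ≤ fR f x :=
  le_sSup ⟨w, h, rfl⟩

lemma fL_ge (f : I → I) {x w : I} (h : w ≤ x) : f w ≤ fL f x :=
  le_sSup ⟨w, h, rfl⟩

lemma le_fR (f : I → I) (x : I) : f x ≤ fR f x := fR_ge f le_rfl

lemma le_fL (f : I → I) (x : I) : f x ≤ fL f x := fL_ge f le_rfl

lemma le_fmeet (f g : I → I) {x y z : I} (h : min y z = x) :
    min (f y) (g z) ≤ fmeet f g x :=
  le_sSup ⟨y, z, h, rfl⟩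

lemma min_monotone_left (y : I) : Monotone fun x : I => min x y :=
  fun _ _ h => min_le_min h le_rfl

lemma min_monotone_right (x : I) : Monotone fun y : I => min x y :=
  fun _ _ h => min_le_min le_rfl h

lemma min_cont : IsCont (fun x y : I => min x y) := continuous_min

lemma fmeet_eq (f g : I → I) (x : I) :
    fmeet f g x = max (min (f x) (fR g x)) (min (fR f x) (g x)) := by
  apply le_antisymm
  · apply sSup_le
    rintro a ⟨y, z, hyz, rfl⟩
    rcases le_total y z with h | h
    · rw [min_eq_left h] at hyz; subst hyz
      exact le_trans (min_le_min le_rfl (fR_ge g h)) (le_max_left _ _)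
    · rw [min_eq_right h] at hyz; subst hyz
      exact le_trans (min_le_min (fR_ge f h) le_rfl) (le_max_right _ _)
  · apply max_le
    · have h' : min (f x) (sSup (g '' Set.Ici x)) =
          sSup ((fun a => min (f x) a) '' (g '' Set.Ici x)) :=
        map_sSup_right min_cont min_monotone_right
          (fun c => min_eq_right (I_zero_le c)) (g '' Set.Ici x) (f x)
      calc min (f x) (fR g x) = sSup ((fun a => min (f x) a) '' (g '' Set.Ici x)) := h'
        _ ≤ fmeet f g x := by
            apply sSup_le
            rintro _ ⟨_, ⟨z, hz, rfl⟩, rfl⟩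
            exact le_fmeet f g (min_eq_left hz)
    · have h' : min (sSup (f '' Set.Ici x)) (g x) =
          sSup ((fun a => min a (g x)) '' (f '' Set.Ici x)) :=
        map_sSup_left min_cont min_monotone_left
          (fun c => min_eq_left (I_zero_le c)) (f '' Set.Ici x) (g x)
      calc min (fR f x) (g x) = sSup ((fun a => min a (g x)) '' (f '' Set.Ici x)) := h'
        _ ≤ fmeet f g x := by
            apply sSup_le
            rintro _ ⟨_, ⟨y, hy, rfl⟩, rfl⟩
            exact le_fmeet f g (min_eq_right hy)

lemma sqle_iff (f g : I → I) :
    sqle f g ↔ ∀ x, min (fR f x) (g x) ≤ f x ∧ f x ≤ fR g x := by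
  unfold sqle
  rw [funext_iff]
  apply forall_congr'
  intro x
  rw [fmeet_eq]
  constructor
  · intro h
    constructor
    · rw [← h]; exact le_max_right _ _
    · by_contra hgt
      push_neg at hgt
      have h2 : max (min (f x) (fR g x)) (min (fR f x) (g x)) < f x :=
        max_lt (by rw [min_eq_right hgt.le]; exact hgt)
          (lt_of_le_of_lt (le_trans (min_le_right _ _) (le_fR g x)) hgt)
      rw [h] at h2
      exact lt_irrefl _ h2
  · rintro ⟨h1, h2⟩
    apply le_antisymm (max_le (min_le_left _ _) h1)
    exact le_max_of_le_left (min_eq_left h2).ge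

lemma min_fL_fR {f : I → I} (hf : IsConvexFn f) (x : I) : min (fL f x) (fR f x) ≤ f x := by
  apply min_sSup_le' (A := f '' Set.Iic x) (B := f '' Set.Ici x)
    ⟨f x, x, Set.mem_Iic.2 le_rfl, rfl⟩ ⟨f x, x, Set.mem_Ici.2 le_rfl, rfl⟩
  rintro _ ⟨w, hw, rfl⟩ _ ⟨w', hw', rfl⟩
  exact hf w x w' hw hw'

lemma le_fL_of {f g : I → I} (hfn : IsNormal f) {x : I}
    (h : min (fR f x) (g x) ≤ f x) : g x ≤ fL f x := by
  by_contra hgt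
  push_neg at hgt
  have hfx : f x ≤ fL f x := le_fL f x
  have hR : fR f x ≤ fL f x := by
    rcases le_total (fR f x) (g x) with hc | hc
    · rw [min_eq_left hc] at h; exact le_trans h hfx
    · rw [min_eq_right hc] at h
      exact absurd (lt_of_le_of_lt (le_trans h hfx) hgt) (lt_irrefl _)
  have hrange : Set.range f = (f '' Set.Iic x) ∪ (f '' Set.Ici x) := by
    apply Set.Subset.antisymm
    · rintro _ ⟨w, rfl⟩
      rcases le_total w x with hw | hw
      · exact Or.inl ⟨w, hw, rfl⟩
      · exact Or.inr ⟨w, hw, rfl⟩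
    · rintro _ (⟨w, _, rfl⟩ | ⟨w, _, rfl⟩) <;> exact ⟨w, rfl⟩
  have hu : sSup (Set.range f) = fL f x ⊔ fR f x := by
    rw [hrange, sSup_union]; rfl
  have h1 : fL f x = 1 := by
    calc fL f x = fL f x ⊔ fR f x := (sup_eq_left.2 hR).symm
      _ = sSup (Set.range f) := hu.symm
      _ = 1 := hfn
  rw [h1] at hgt
  exact absurd hgt (not_lt.2 (I_le_one _))

lemma fR_conv (star tri : I → I → I) (f g : I → I) (x : I) :
    fR (conv star tri f g) x = sSup {a : I | ∃ y z, x ≤ tri y z ∧ a = star (f y) (g z)} := by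
  apply le_antisymm
  · apply sSup_le
    rintro _ ⟨w, hw, rfl⟩
    apply sSup_le
    rintro a ⟨y, z, hyz, rfl⟩
    exact le_sSup ⟨y, z, hyz ▸ hw, rfl⟩
  · apply sSup_le
    rintro a ⟨y, z, hx, rfl⟩
    exact le_trans (le_conv rfl) (le_sSup ⟨tri y z, hx, rfl⟩)

end Meet
section Mono

lemma conv_mono {star tri : I → I → I} (hstarc : IsCont star)
    (hstarm1 : ∀ y : I, Monotone fun x => star x y)
    (hstarm2 : ∀ x : I, Monotone fun y => star x y)
    (hs0r : ∀ x : I, star x 0 = 0) (htric : IsCont tri)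
    (htm2 : ∀ x : I, Monotone fun y => tri x y)
    {f g h : I → I} (hf : InL f) (hg : InL g) (hh : InL h) (hgh : sqle g h) :
    sqle (conv star tri f g) (conv star tri f h) := by
  rw [sqle_iff] at hgh ⊢
  intro x
  constructor
  · -- min (fR (conv f g) x) (conv f h x) ≤ conv f g x
    have hFL : conv star tri f h x ≤ fL (conv star tri f g) x := by
      apply sSup_le
      rintro a ⟨p, q, hpq, rfl⟩
      have hq : h q ≤ fL g q := le_fL_of hg.1 (hgh q).1
      have heq : star (f p) (sSup (g '' Set.Iic q)) =
          sSup ((fun a => star (f p) a) '' (g '' Set.Iic q)) :=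
        map_sSup_right hstarc hstarm2 hs0r _ _
      calc star (f p) (h q) ≤ star (f p) (fL g q) := hstarm2 (f p) hq
        _ = sSup ((fun a => star (f p) a) '' (g '' Set.Iic q)) := heq
        _ ≤ fL (conv star tri f g) x := by
            apply sSup_le
            rintro _ ⟨_, ⟨b, hb, rfl⟩, rfl⟩
            refine le_trans (le_conv rfl) (fL_ge _ ?_)
            calc tri p b ≤ tri p q := htm2 p hb
              _ = x := hpq
    calc min (fR (conv star tri f g) x) (conv star tri f h x)
        ≤ min (fR (conv star tri f g) x) (fL (conv star tri f g) x) :=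
          min_le_min le_rfl hFL
      _ = min (fL (conv star tri f g) x) (fR (conv star tri f g) x) := min_comm _ _
      _ ≤ conv star tri f g x := min_fL_fR (conv_convex hstarm1 hstarm2 htric hf.2 hg.2) x
  · -- conv f g x ≤ fR (conv f h) x
    apply sSup_le
    rintro a ⟨y, z, hyz, rfl⟩
    have heq : star (f y) (sSup (h '' Set.Ici z)) =
        sSup ((fun a => star (f y) a) '' (h '' Set.Ici z)) :=
      map_sSup_right hstarc hstarm2 hs0r _ _
    calc star (f y) (g z) ≤ star (f y) (fR h z) := hstarm2 (f y) (hgh z).2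
      _ = sSup ((fun a => star (f y) a) '' (h '' Set.Ici z)) := heq
      _ ≤ fR (conv star tri f h) x := by
          apply sSup_le
          rintro _ ⟨_, ⟨w, hw, rfl⟩, rfl⟩
          refine le_trans (le_conv rfl) (fR_ge _ ?_)
          calc x = tri y z := hyz.symm
            _ ≤ tri y w := htm2 y hw

end Mono
theorem stmt_18 (star tri : I → I → I) (hstar : IsTnorm star) (hstarc : IsCont star)
    (htric : IsCont tri) :
    IsTnorm tri ↔ IsTnormOnL (conv star tri) := by
  obtain ⟨sc, sa, sm1, sm2, s1l, s1r⟩ := hstar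
  have s0r : ∀ c : I, star c 0 = 0 := fun c =>
    le_antisymm (le_trans (sm1 0 (I_le_one c)) (le_of_eq (s1l 0))) (I_zero_le _)
  have s0l : ∀ c : I, star 0 c = 0 := fun c =>
    le_antisymm (le_trans (sm2 0 (I_le_one c)) (le_of_eq (s1r 0))) (I_zero_le _)
  constructor
  · rintro ⟨tc, ta, tm1, tm2, t1l, t1r⟩
    refine ⟨?_, ?_, ?_, ?_, ?_⟩
    · exact fun f g hf hg => ⟨conv_normal hstarc sm2 s0r s1r hf.1 hg.1,
        conv_convex sm1 sm2 htric hf.2 hg.2⟩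
    · exact fun f g _ _ => conv_comm' sc tc f g
    · exact fun f g h _ _ _ => conv_assoc' hstarc sa sm1 sm2 s0l s0r ta f g h
    · exact fun f _ => conv_chi_one s0r s1r t1r f
    · exact fun f g h hf hg hh hgh =>
        conv_mono hstarc sm1 sm2 s0r htric tm2 hf hg hh hgh
  · rintro ⟨Hcl, Hcomm, Hassoc, Hneut, Hmono⟩
    have cchi : ∀ u v : I, conv star tri (chi u) (chi v) = chi (tri u v) :=
      conv_chi_s18 (s1l 1) s0l s0r
    have mchi : ∀ u v : I, fmeet (chi u) (chi v) = chi (min u v) := fun u v =>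
      conv_chi_s18 (op := fun x y : I => min x y) (tr := fun x y : I => min x y)
        (min_self 1) (fun a => min_eq_left (I_zero_le a))
        (fun a => min_eq_right (I_zero_le a)) u v
    have tcomm : ∀ u v : I, tri u v = tri v u := by
      intro u v
      apply chi_inj
      have := Hcomm (chi u) (chi v) (chi_InL u) (chi_InL v)
      rwa [cchi, cchi] at this
    have tassoc : ∀ u v w : I, tri (tri u v) w = tri u (tri v w) := by
      intro u v w
      apply chi_inj
      have := Hassoc (chi u) (chi v) (chi w) (chi_InL u) (chi_InL v) (chi_InL w)
      rwa [cchi, cchi, cchi, cchi] at this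
    have tneutr : ∀ u : I, tri u 1 = u := by
      intro u
      apply chi_inj
      have := Hneut (chi u) (chi_InL u)
      rwa [cchi] at this
    have tmono2 : ∀ u : I, Monotone fun v => tri u v := by
      intro u a b hab
      have hsq : sqle (chi a) (chi b) := by
        show fmeet (chi a) (chi b) = chi a
        rw [mchi, min_eq_left hab]
      have h2 := Hmono (chi u) (chi a) (chi b) (chi_InL u) (chi_InL a) (chi_InL b) hsq
      have h3 : fmeet (chi (tri u a)) (chi (tri u b)) = chi (tri u a) := by
        rw [← cchi u a, ← cchi u b]; exact h2
      rw [mchi] at h3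
      exact min_eq_left_iff.mp (chi_inj h3)
    have tmono1 : ∀ v : I, Monotone fun u => tri u v := by
      intro v a b hab
      show tri a v ≤ tri b v
      rw [tcomm a v, tcomm b v]
      exact tmono2 v hab
    have tneutl : ∀ u : I, tri 1 u = u := fun u => by rw [tcomm]; exact tneutr u
    exact ⟨tcomm, tassoc, tmono1, tmono2, tneutl, tneutr⟩
end
end
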